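/- Let σ ∈ (1/2, 1). Then for every ξ with |ξ| > 1, the even symmetrization g(ξ) = (p₁(ξ) + p₁(−ξ))/2 satisfies g(ξ) ≤ |ξ|^{2σ} − (2 − 2^{2σ−1}); that is, (1/2)·((|ξ|+1)^{2σ} + (|ξ|−1)^{2σ}) − 1 ≤ |ξ|^{2σ} − (2 − 2^{2σ−1}). -/

import Mathlib

/-!
Writing `α = 2σ ∈ (1, 2)` and `r = |ξ|`, the even part equals `((r+1)^α + (r-1)^α)/2 - 1`, so the
claim is `(r+1)^α + (r-1)^α - 2 r^α ≤ 2^α - 2`, i.e. the second difference of `t ↦ t^α` at `r`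
is at most its value at `r = 1`. That second difference is antitone in `r`: its derivative is
`α` times the second difference of `t ↦ t^(α-1)`, which is `≤ 0` because `t^(α-1)` is concave.
-/

open Real

/-- The symbol `p₁(ξ) = |ξ+1|^{2σ} − 1 − 2σξ`. -/
noncomputable def pOne (σ : ℝ) (ξ : ℝ) : ℝ := |ξ + 1| ^ (2*σ) - 1 - 2*σ*ξ

open Set

namespace Real

lemma rpow_add_rpow_sub_le_two_mul_rpow {p : ℝ} (hp₀ : 0 ≤ p) (hp₁ : p ≤ 1) {x : ℝ}
    (hx : 1 ≤ x) : (x + 1) ^ p + (x - 1) ^ p ≤ 2 * x ^ p := by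
  have h := (concaveOn_rpow hp₀ hp₁).2 (mem_Ici.2 (by linarith : (0 : ℝ) ≤ x + 1))
    (mem_Ici.2 (by linarith : (0 : ℝ) ≤ x - 1)) (by norm_num : (0 : ℝ) ≤ 1 / 2)
    (by norm_num : (0 : ℝ) ≤ 1 / 2) (by norm_num)
  simp only [smul_eq_mul] at h
  rw [show (1 / 2 : ℝ) * (x + 1) + 1 / 2 * (x - 1) = x by ring] at h
  linarith

lemma antitoneOn_rpow_second_difference {α : ℝ} (hα₁ : 1 ≤ α) (hα₂ : α ≤ 2) :
    AntitoneOn (fun x : ℝ ↦ (x + 1) ^ α + (x - 1) ^ α - 2 * x ^ α) (Ici 1) := by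
  have hcont : Continuous fun x : ℝ ↦ x ^ α := continuous_rpow_const (by linarith)
  refine antitoneOn_of_hasDerivWithinAt_nonpos (convex_Ici 1)
    (f' := fun x ↦ α * ((x + 1) ^ (α - 1) + (x - 1) ^ (α - 1) - 2 * x ^ (α - 1)))
    (by fun_prop) (fun x _ ↦ ?_) (fun x hx ↦ ?_)
  · have hd (c : ℝ) : HasDerivAt (fun y : ℝ ↦ (y + c) ^ α) (α * (x + c) ^ (α - 1)) x := by
      simpa using ((hasDerivAt_id x).add_const c).rpow_const (p := α) (Or.inr hα₁)
    have h := ((hd 1).add (hd (-1))).sub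
      (((hasDerivAt_id x).rpow_const (Or.inr hα₁)).const_mul 2)
    refine HasDerivAt.hasDerivWithinAt ?_
    convert h using 1
    · funext y
      simp [sub_eq_add_neg]
    · simp only [id, one_mul, ← sub_eq_add_neg]
      ring
  · rw [interior_Ici] at hx
    have := rpow_add_rpow_sub_le_two_mul_rpow (by linarith : 0 ≤ α - 1) (by linarith) hx.le
    exact mul_nonpos_of_nonneg_of_nonpos (by linarith) (by linarith)

lemma rpow_second_difference_le {α r : ℝ} (hα₁ : 1 ≤ α) (hα₂ : α ≤ 2) (hr : 1 ≤ r) :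
    (r + 1) ^ α + (r - 1) ^ α - 2 * r ^ α ≤ 2 ^ α - 2 := by
  have h := antitoneOn_rpow_second_difference hα₁ hα₂ self_mem_Ici (mem_Ici.2 hr) hr
  norm_num [zero_rpow (by linarith : α ≠ 0)] at h
  linarith

end Real

lemma abs_add_one_rpow_add_abs_neg_add_one_rpow {ξ : ℝ} (hξ : 1 ≤ |ξ|) (p : ℝ) :
    |ξ + 1| ^ p + |-ξ + 1| ^ p = (|ξ| + 1) ^ p + (|ξ| - 1) ^ p := by
  rcases le_or_gt 0 ξ with h | h
  · rw [abs_of_nonneg h] at hξ ⊢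
    rw [abs_of_nonneg (by linarith : 0 ≤ ξ + 1), abs_of_nonpos (by linarith : -ξ + 1 ≤ 0)]
    ring_nf
  · rw [abs_of_neg h] at hξ ⊢
    rw [abs_of_nonpos (by linarith : ξ + 1 ≤ 0), abs_of_pos (by linarith : 0 < -ξ + 1)]
    ring_nf

lemma pOne_add_pOne_neg {σ ξ : ℝ} (hξ : 1 ≤ |ξ|) :
    pOne σ ξ + pOne σ (-ξ) = (|ξ| + 1) ^ (2 * σ) + (|ξ| - 1) ^ (2 * σ) - 2 := by
  rw [← abs_add_one_rpow_add_abs_neg_add_one_rpow hξ, pOne, pOne]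
  ring

/-- For `|ξ| > 1`, the even part `g(ξ) = (p₁(ξ) + p₁(−ξ))/2` satisfies
`g(ξ) ≤ |ξ|^{2σ} − (2 − 2^{2σ−1})`; that is,
`(1/2)((|ξ|+1)^{2σ} + (|ξ|−1)^{2σ}) − 1 ≤ |ξ|^{2σ} − (2 − 2^{2σ−1})`. -/
theorem pOne_even_part_high (σ : ℝ) (hσ : σ ∈ Set.Ioo (1/2 : ℝ) 1) :
    ∀ ξ : ℝ, 1 < |ξ| →
      (pOne σ ξ + pOne σ (-ξ)) / 2 ≤ |ξ| ^ (2*σ) - (2 - (2 : ℝ) ^ (2*σ - 1)) ∧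
      (1/2) * ((|ξ| + 1) ^ (2*σ) + (|ξ| - 1) ^ (2*σ)) - 1 ≤
        |ξ| ^ (2*σ) - (2 - (2 : ℝ) ^ (2*σ - 1)) := by
  intro ξ hξ
  have hsecond := rpow_second_difference_le (α := 2 * σ) (by linarith [hσ.1]) (by linarith [hσ.2])
    hξ.le
  have hhalf : (2 : ℝ) ^ (2 * σ - 1) = 2 ^ (2 * σ) / 2 := by
    rw [rpow_sub two_pos, rpow_one]
  rw [pOne_add_pOne_neg hξ.le, hhalf]
  constructor <;> linarith
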